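/- arXiv:2403.09231 — 2 statements merged into one kernel-verified Lean document; each statement's English description precedes it below -/
import Mathlib

section
/- Let (A, H) be a matched pair of quasigroupoids. Then λ_H(φ_H(h,a)) = φ_H(λ_H(h), φ_A(h,a)) for all (h,a) with s_H(h) = t_A(a). -/
/-- A quasigroupoid: objects `O`, arrows `A`, with a partial product `mul`
(meaningful on composable pairs, i.e. when `s a = t b`) and inverse map `inv`.
All axioms involving the product are guarded by composability hypotheses. -/
structure Quasigroupoid (O : Type*) (A : Type*) where
  s : A → O
  t : A → O
  e : O → A
  inv : A → A
  mul : A → A → A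
  s_e : ∀ x, s (e x) = x
  t_e : ∀ x, t (e x) = x
  e_mul : ∀ a, mul (e (t a)) a = a
  mul_e : ∀ a, mul a (e (s a)) = a
  s_mul : ∀ a b, s a = t b → s (mul a b) = s b
  t_mul : ∀ a b, s a = t b → t (mul a b) = t a
  inv_comp_left : ∀ a b, s a = t b → s (inv a) = t (mul a b)
  inv_mul_cancel : ∀ a b, s a = t b → mul (inv a) (mul a b) = b
  comp_inv_right : ∀ a b, s a = t b → s (mul a b) = t (inv b)
  mul_inv_cancel : ∀ a b, s a = t b → mul (mul a b) (inv b) = a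

/-- A matched pair of quasigroupoids with common base `O`:
a left action `φA` of `H` on `A` and a right action `φH` of `A` on `H`
satisfying the module conditions and the matched pair compatibilities. -/
structure IsMatchedPair {O A1 H1 : Type*} (A : Quasigroupoid O A1) (H : Quasigroupoid O H1)
    (φA : H1 → A1 → A1) (φH : H1 → A1 → H1) : Prop where
  t_act : ∀ h a, H.s h = A.t a → A.t (φA h a) = H.t h
  act_mul : ∀ g h a, H.s g = H.t h → H.s h = A.t a → φA (H.mul g h) a = φA g (φA h a)
  act_id : ∀ a, φA (H.e (A.t a)) a = a
  s_act : ∀ h a, H.s h = A.t a → H.s (φH h a) = A.s a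
  actH_mul : ∀ h a b, H.s h = A.t a → A.s a = A.t b → φH h (A.mul a b) = φH (φH h a) b
  actH_id : ∀ h, φH h (A.e (H.s h)) = h
  compat_st : ∀ h a, H.s h = A.t a → A.s (φA h a) = H.t (φH h a)
  compat_mulA : ∀ h a b, H.s h = A.t a → A.s a = A.t b →
    φA h (A.mul a b) = A.mul (φA h a) (φA (φH h a) b)
  compat_mulH : ∀ g h a, H.s g = H.t h → H.s h = A.t a →
    φH (H.mul g h) a = H.mul (φH g (φA h a)) (φH h a)

namespace Quasigroupoid

variable {O T : Type*} (Q : Quasigroupoid O T)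

lemma mul_inv (x : T) : Q.mul x (Q.inv x) = Q.e (Q.t x) := by
  simpa only [Q.e_mul] using Q.mul_inv_cancel (Q.e (Q.t x)) x (Q.s_e _)

lemma inv_mul (x : T) : Q.mul (Q.inv x) x = Q.e (Q.s x) := by
  simpa only [Q.mul_e] using Q.inv_mul_cancel x (Q.e (Q.s x)) (Q.t_e _).symm

lemma s_inv (x : T) : Q.s (Q.inv x) = Q.t x := by
  simpa only [Q.mul_e] using Q.inv_comp_left x (Q.e (Q.s x)) (Q.t_e _).symm

lemma t_inv (x : T) : Q.t (Q.inv x) = Q.s x := by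
  simpa only [Q.e_mul] using (Q.comp_inv_right (Q.e (Q.t x)) x (Q.s_e _)).symm

lemma eq_e_of_mul_self {x : T} (hx : Q.s x = Q.t x) (hxx : Q.mul x x = x) :
    x = Q.e (Q.s x) := by
  calc x = Q.mul (Q.inv x) (Q.mul x x) := (Q.inv_mul_cancel x x hx).symm
    _ = Q.e (Q.s x) := by rw [hxx, Q.inv_mul]

lemma eq_inv_of_mul_eq_e {x y : T} (hxy : Q.s x = Q.t y) (h : Q.mul x y = Q.e (Q.t x)) :
    y = Q.inv x := by
  calc y = Q.mul (Q.inv x) (Q.mul x y) := (Q.inv_mul_cancel x y hxy).symm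
    _ = Q.inv x := by rw [h, ← Q.s_inv, Q.mul_e]

end Quasigroupoid

namespace IsMatchedPair

variable {O A1 H1 : Type*} {A : Quasigroupoid O A1} {H : Quasigroupoid O H1}
  {φA : H1 → A1 → A1} {φH : H1 → A1 → H1}

/-- `φH (e, a)` is idempotent by `compat_mulH` applied to `e ⋆ e = e`, hence an identity. -/
lemma actH_e (hmp : IsMatchedPair A H φA φH) (a : A1) :
    φH (H.e (A.t a)) a = H.e (A.s a) := by
  set g := H.e (A.t a)
  have hsg : H.s g = A.t a := H.s_e _
  have hact : φA g a = a := hmp.act_id a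
  have hgg : H.mul g g = g := by
    simpa only [show H.t g = A.t a from H.t_e _] using H.e_mul g
  have hsu : H.s (φH g a) = A.s a := hmp.s_act g a hsg
  have htu : H.t (φH g a) = A.s a := by
    rw [← hmp.compat_st g a hsg, hact]
  have hidem : H.mul (φH g a) (φH g a) = φH g a := by
    have := hmp.compat_mulH g g a (by rw [hsg, H.t_e]) hsg
    rwa [hgg, hact, eq_comm] at this
  rw [H.eq_e_of_mul_self (hsu.trans htu.symm) hidem, hsu]

lemma act_inv_act (hmp : IsMatchedPair A H φA φH) {h : H1} {a : A1} (hc : H.s h = A.t a) :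
    φA (H.inv h) (φA h a) = a := by
  rw [← hmp.act_mul (H.inv h) h a (H.s_inv h) hc, H.inv_mul, hc, hmp.act_id]

end IsMatchedPair

/-- For a matched pair of quasigroupoids: `λ_H(φH(h,a)) = φH(λ_H h, φA(h,a))`. -/
theorem matchedPair_inv_actH {O A1 H1 : Type*}
    (A : Quasigroupoid O A1) (H : Quasigroupoid O H1)
    (φA : H1 → A1 → A1) (φH : H1 → A1 → H1)
    (hmp : IsMatchedPair A H φA φH) (h : H1) (a : A1) (hc : H.s h = A.t a) :
    H.inv (φH h a) = φH (H.inv h) (φA h a) := by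
  have htb : A.t (φA h a) = H.t h := hmp.t_act h a hc
  have hc' : H.s (H.inv h) = A.t (φA h a) := by rw [H.s_inv, htb]
  have hAinv := hmp.act_inv_act hc
  -- `compat_mulH` applied to `h ⋆ λ_H h = e` exhibits `φH (λ_H h, φA (h, a))` as a right inverse.
  have hright : H.mul (φH h a) (φH (H.inv h) (φA h a)) = H.e (H.t (φH h a)) := by
    have := hmp.compat_mulH h (H.inv h) (φA h a) (H.t_inv h).symm hc'
    rw [H.mul_inv, ← htb, hmp.actH_e, hAinv, hmp.compat_st h a hc] at this
    exact this.symm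
  have hcomp : H.s (φH h a) = H.t (φH (H.inv h) (φA h a)) := by
    rw [hmp.s_act h a hc, ← hmp.compat_st _ _ hc', hAinv]
  exact (H.eq_inv_of_mul_eq_e hcomp hright).symm
end

section
/- Let (A, H) be a matched pair of quasigroupoids and i^A, i^H the canonical inclusions into A⋈H. For all g ∈ H₁ and composable a, b ∈ A₁ with s_H(g) = t_A(a) and s_A(a) = t_A(b), the mixed associativity i^H(g)·(i^A(a)·i^A(b)) = (i^H(g)·i^A(a))·i^A(b) holds in A⋈H. -/
variable {O A1 H1 : Type*}

/-- The canonical inclusion of `A` into the arrows of `A ⋈ H` (first component). -/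
def incA (A : Quasigroupoid O A1) (H : Quasigroupoid O H1) (a : A1) : A1 × H1 :=
  (a, H.e (A.s a))

/-- The canonical inclusion of `H` into the arrows of `A ⋈ H` (second component). -/
def incH (A : Quasigroupoid O A1) (H : Quasigroupoid O H1) (g : H1) : A1 × H1 :=
  (A.e (H.t g), g)

/-- The double cross product `(a,g)·(b,h) = (a • φA(g,b), φH(g,b) ⋆ h)` of `A ⋈ H`
(the formula defining the product of `A ⋈ H` on composable pairs). -/
def dcpMul (A : Quasigroupoid O A1) (H : Quasigroupoid O H1)
    (φA : H1 → A1 → A1) (φH : H1 → A1 → H1) (p q : A1 × H1) : A1 × H1 :=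
  (A.mul p.1 (φA p.2 q.1), H.mul (φH p.2 q.1) q.2)

/-! The inclusion `i^A` is multiplicative and `i^H(g)·i^A(c) = (φA(g,c), φH(g,c))`, so the two sides
become `g` acting on `a • b` and on `a`, `b` in turn; these agree by `compat_mulA` and `actH_mul`.
The one identity needed beyond the axioms is `φH(e, b) = e`: by `compat_mulH` it is idempotent,
and an idempotent arrow of a quasigroupoid is an identity. -/

namespace Quasigroupoid

variable (Q : Quasigroupoid O A1)

theorem e_mul_of_t_eq {a : A1} {x : O} (h : Q.t a = x) : Q.mul (Q.e x) a = a :=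
  h ▸ Q.e_mul a

theorem mul_e_of_s_eq {a : A1} {x : O} (h : Q.s a = x) : Q.mul a (Q.e x) = a :=
  h ▸ Q.mul_e a

theorem e_mul_e (x : O) : Q.mul (Q.e x) (Q.e x) = Q.e x :=
  Q.e_mul_of_t_eq (Q.t_e x)

theorem mul_inv_self (a : A1) : Q.mul a (Q.inv a) = Q.e (Q.t a) := by
  simpa only [Q.e_mul] using Q.mul_inv_cancel (Q.e (Q.t a)) a (Q.s_e _)

theorem eq_e_of_mul_eq_right {a b : A1} (hs : Q.s a = Q.t b) (h : Q.mul a b = b) :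
    a = Q.e (Q.t b) := by
  simpa only [h, Q.mul_inv_self] using (Q.mul_inv_cancel a b hs).symm

end Quasigroupoid

namespace IsMatchedPair

variable {A : Quasigroupoid O A1} {H : Quasigroupoid O H1} {φA : H1 → A1 → A1}
  {φH : H1 → A1 → H1}

theorem actH_e_t (hmp : IsMatchedPair A H φA φH) (b : A1) :
    φH (H.e (A.t b)) b = H.e (A.s b) := by
  have hs : H.s (H.e (A.t b)) = A.t b := H.s_e _
  have s_eq : H.s (φH (H.e (A.t b)) b) = A.s b := hmp.s_act _ b hs
  have t_eq : H.t (φH (H.e (A.t b)) b) = A.s b := by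
    simpa only [hmp.act_id] using (hmp.compat_st _ b hs).symm
  have idem : H.mul (φH (H.e (A.t b)) b) (φH (H.e (A.t b)) b) = φH (H.e (A.t b)) b := by
    have h := hmp.compat_mulH _ _ b (by rw [H.s_e, H.t_e]) hs
    rwa [H.e_mul_e, hmp.act_id, eq_comm] at h
  simpa only [t_eq] using H.eq_e_of_mul_eq_right (s_eq.trans t_eq.symm) idem

end IsMatchedPair

section DoubleCrossProduct

variable {A : Quasigroupoid O A1} {H : Quasigroupoid O H1} {φA : H1 → A1 → A1}
  {φH : H1 → A1 → H1}

theorem dcpMul_incA_right (hmp : IsMatchedPair A H φA φH) (p : A1 × H1) {b : A1}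
    (h : H.s p.2 = A.t b) :
    dcpMul A H φA φH p (incA A H b) = (A.mul p.1 (φA p.2 b), φH p.2 b) := by
  simp only [dcpMul, incA, H.mul_e_of_s_eq (hmp.s_act _ b h)]

theorem dcpMul_incA_incA (hmp : IsMatchedPair A H φA φH) {a b : A1} (h : A.s a = A.t b) :
    dcpMul A H φA φH (incA A H a) (incA A H b) = incA A H (A.mul a b) := by
  rw [dcpMul_incA_right hmp _ (by simpa only [incA, H.s_e] using h)]
  simp only [incA, h, hmp.act_id, hmp.actH_e_t, A.s_mul a b h]

theorem dcpMul_incH_incA (hmp : IsMatchedPair A H φA φH) {g : H1} {a : A1}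
    (h : H.s g = A.t a) :
    dcpMul A H φA φH (incH A H g) (incA A H a) = (φA g a, φH g a) := by
  rw [dcpMul_incA_right hmp _ h]
  simp only [incH, A.e_mul_of_t_eq (hmp.t_act g a h)]

end DoubleCrossProduct

/-- Mixed associativity `i^H(g)·(i^A(a)·i^A(b)) = (i^H(g)·i^A(a))·i^A(b)` in `A ⋈ H`. -/
theorem mixed_assoc_HAA
    (A : Quasigroupoid O A1) (H : Quasigroupoid O H1)
    (φA : H1 → A1 → A1) (φH : H1 → A1 → H1)
    (hmp : IsMatchedPair A H φA φH)
    (g : H1) (a b : A1) (h1 : H.s g = A.t a) (h2 : A.s a = A.t b) :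
    dcpMul A H φA φH (incH A H g) (dcpMul A H φA φH (incA A H a) (incA A H b)) =
      dcpMul A H φA φH (dcpMul A H φA φH (incH A H g) (incA A H a)) (incA A H b) := by
  have hab : H.s g = A.t (A.mul a b) := h1.trans (A.t_mul a b h2).symm
  rw [dcpMul_incA_incA hmp h2, dcpMul_incH_incA hmp hab, dcpMul_incH_incA hmp h1,
    dcpMul_incA_right hmp _ ((hmp.s_act g a h1).trans h2), hmp.compat_mulA g a b h1 h2,
    hmp.actH_mul g a b h1 h2]
end
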